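/- There exists a natural number N such that for all n ≥ N, the mid-near false-negative probability is strictly smaller than the uniform-sampling false-negative probability: 1 − P̄(n) < 10 / n. -/

import Mathlib

/-!
Writing `P̄(n) = (n - 10)/n · (n + 45)(n - 11)⋯(n - 14) / ((n - 1)⋯(n - 5))`, the claim
`1 - P̄(n) < 10/n` becomes `(n - 1)⋯(n - 5) < (n + 45)(n - 11)⋯(n - 14)`. Both sides are monic
quintics with the same `n⁴`-coefficient `-15`, and their difference is the quartic
`10 (n⁴ - 140 n³ + 3455 n² - 32500 n + 108120)`, which is positive once `n ≥ 140`.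
-/

/-- The probability that a mid-near sample is not a false negative. -/
noncomputable def Pbar (n : ℕ) : ℝ :=
  (((n : ℝ) + 45) * ((n : ℝ) - 10) * ((n : ℝ) - 11) * ((n : ℝ) - 12) *
      ((n : ℝ) - 13) * ((n : ℝ) - 14)) /
    ((n : ℝ) * ((n : ℝ) - 1) * ((n : ℝ) - 2) * ((n : ℝ) - 3) *
      ((n : ℝ) - 4) * ((n : ℝ) - 5))

/-- The quartic `(x + 45)(x - 11)⋯(x - 14) - (x - 1)⋯(x - 5)`. -/
def midnearGapQuartic (x : ℝ) : ℝ :=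
  10 * (x ^ 4 - 140 * x ^ 3 + 3455 * x ^ 2 - 32500 * x + 108120)

theorem midnearGapQuartic_pos {x : ℝ} (hx : 140 ≤ x) : 0 < midnearGapQuartic x := by
  have hcubic : 0 ≤ x ^ 3 * (x - 140) := mul_nonneg (by positivity) (by linarith)
  have hquadratic : 0 < x * (3455 * x - 32500) := mul_pos (by linarith) (by linarith)
  unfold midnearGapQuartic
  nlinarith

theorem Pbar_sub_eq {n : ℕ} (hn : 5 < n) :
    Pbar n - ((n : ℝ) - 10) / n =
      ((n : ℝ) - 10) * midnearGapQuartic n /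
        ((n : ℝ) * ((n : ℝ) - 1) * ((n : ℝ) - 2) * ((n : ℝ) - 3) * ((n : ℝ) - 4) *
          ((n : ℝ) - 5)) := by
  have hn' : (5 : ℝ) < n := by exact_mod_cast hn
  have h0 : (n : ℝ) ≠ 0 := by linarith
  have h1 : (n : ℝ) - 1 ≠ 0 := by linarith
  have h2 : (n : ℝ) - 2 ≠ 0 := by linarith
  have h3 : (n : ℝ) - 3 ≠ 0 := by linarith
  have h4 : (n : ℝ) - 4 ≠ 0 := by linarith
  have h5 : (n : ℝ) - 5 ≠ 0 := by linarith
  unfold Pbar midnearGapQuartic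
  field_simp
  ring

/-- Eventually, the mid-near false-negative probability is strictly smaller than
the uniform-sampling false-negative probability `10/n`. -/
theorem midnear_beats_uniform_eventually :
    ∃ N : ℕ, ∀ n : ℕ, N ≤ n → 1 - Pbar n < 10 / (n : ℝ) := by
  refine ⟨140, fun n hn => ?_⟩
  have hx : (140 : ℝ) ≤ n := by exact_mod_cast hn
  have hgap : 0 < Pbar n - ((n : ℝ) - 10) / n := by
    rw [Pbar_sub_eq (by omega)]
    refine div_pos (mul_pos (by linarith) (midnearGapQuartic_pos hx)) ?_
    repeat' apply mul_pos
    all_goals linarith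
  have huniform : 1 - ((n : ℝ) - 10) / n = 10 / n := by
    field_simp
    ring
  linarith
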